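/- The automorphism group of the Möbius–Kantor graph MK has exactly 96 elements. -/

import Mathlib

/-!
Automorphisms of `MK` act on its 2-arcs `a - u - b`, and the action is regular. It is free: an
automorphism fixing a 2-arc fixes all three neighbours of `u` because `MK` is cubic; it commutes
with the antipodal map `x ↦ x + 4` (the unique vertex at distance four), and of the two
continuations `b - c` of the 2-arc exactly one has `c` adjacent to the antipode of `a`, so `c` is
fixed as well and the fixed neighbourhoods spread over the connected graph. It is transitive:
rotations and the exchange of the two rings move `(0, 0)` anywhere, and the reflection together
with one exceptional involution permute the neighbours of `(0, 0)` as `S₃`. Hence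
`|Aut MK| = #2-arcs = 16 · 3 · 2 = 96`.
-/

/-- The underlying relation of the Möbius–Kantor graph `GP(8,3)`. -/
def mkRel (v w : ZMod 8 × Fin 2) : Bool :=
  (v.2 == 0 && w.2 == 0 && (w.1 == v.1 + 1 || v.1 == w.1 + 1)) ||
  ((v.2 == 0 && w.2 == 1 || v.2 == 1 && w.2 == 0) && v.1 == w.1) ||
  (v.2 == 1 && w.2 == 1 && (w.1 == v.1 + 3 || v.1 == w.1 + 3))

/-- The Möbius–Kantor graph, i.e. the generalized Petersen graph `GP(8,3)`. -/
def MK : SimpleGraph (ZMod 8 × Fin 2) where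
  Adj v w := mkRel v w = true
  symm := ⟨by intro v w; revert v w; decide⟩
  loopless := ⟨by intro v; revert v; decide⟩

instance : DecidableRel MK.Adj := fun v w => inferInstanceAs (Decidable (mkRel v w = true))

noncomputable instance : Fintype (MK ≃g MK) :=
  Fintype.ofInjective (fun T => T.toEquiv) (fun T S h => by
    cases T; cases S; simpa using h)

namespace SimpleGraph

variable {V W : Type*} {G : SimpleGraph V} {H : SimpleGraph W}

def WithinThree (G : SimpleGraph V) (x y : V) : Prop :=
  ∃ p q, (x = p ∨ G.Adj x p) ∧ (p = q ∨ G.Adj p q) ∧ (q = y ∨ G.Adj q y)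

instance [Fintype V] [DecidableEq V] [DecidableRel G.Adj] : DecidableRel G.WithinThree :=
  fun _ _ => inferInstanceAs (Decidable (∃ _ _, _))

lemma WithinThree.map (T : G ≃g H) {x y : V} (h : G.WithinThree x y) :
    H.WithinThree (T x) (T y) := by
  obtain ⟨p, q, hp, hq, hy⟩ := h
  exact ⟨T p, T q, hp.imp (congrArg T) T.map_adj_iff.2,
    hq.imp (congrArg T) T.map_adj_iff.2, hy.imp (congrArg T) T.map_adj_iff.2⟩

lemma Reachable.of_adj_imp {P : V → Prop} (hP : ∀ ⦃u v⦄, G.Adj u v → P u → P v)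
    {u v : V} (h : G.Reachable u v) (hu : P u) : P v := by
  obtain ⟨p⟩ := h
  induction p with
  | nil => exact hu
  | cons huv _ ih => exact ih (hP huv hu)

section Cubic

variable [G.LocallyFinite] (hG : G.IsRegularOfDegree 3)
include hG

lemma IsRegularOfDegree.eq_or_eq_or_eq_of_adj {u a b c x : V} (ha : G.Adj u a) (hb : G.Adj u b)
    (hc : G.Adj u c) (hab : a ≠ b) (hac : a ≠ c) (hbc : b ≠ c) (hx : G.Adj u x) :
    x = a ∨ x = b ∨ x = c := by
  classical
  have hsub : {a, b, c} ⊆ G.neighborFinset u := by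
    simp [Finset.insert_subset_iff, ha, hb, hc]
  have hcard : (G.neighborFinset u).card ≤ ({a, b, c} : Finset V).card := by
    rw [card_neighborFinset_eq_degree, hG.degree_eq,
      Finset.card_eq_three.2 ⟨a, b, c, hab, hac, hbc, rfl⟩]
  have hx' := (G.mem_neighborFinset u x).2 hx
  rw [← Finset.eq_of_subset_of_card_le hsub hcard] at hx'
  simpa using hx'

lemma IsRegularOfDegree.iso_fixes_neighbors (T : G ≃g G) {u a b : V} (ha : G.Adj u a)
    (hb : G.Adj u b) (hab : a ≠ b) (hTu : T u = u) (hTa : T a = a) (hTb : T b = b) :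
    ∀ x, G.Adj u x → T x = x := by
  intro x hx
  by_cases hxa : x = a
  · rwa [hxa]
  by_cases hxb : x = b
  · rwa [hxb]
  have hTx : G.Adj u (T x) := by simpa [hTu] using T.map_adj_iff.2 hx
  rcases hG.eq_or_eq_or_eq_of_adj ha hb hx hab (Ne.symm hxa) (Ne.symm hxb) hTx with h | h | h
  · exact absurd (T.injective (h.trans hTa.symm)) hxa
  · exact absurd (T.injective (h.trans hTb.symm)) hxb
  · exact h

end Cubic

@[ext]
structure TwoArc (G : SimpleGraph V) where
  src : V
  mid : V
  dst : V
  adj_src_mid : G.Adj src mid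
  adj_mid_dst : G.Adj mid dst
  src_ne_dst : src ≠ dst

namespace TwoArc

def map (T : G ≃g H) (t : G.TwoArc) : H.TwoArc where
  src := T t.src
  mid := T t.mid
  dst := T t.dst
  adj_src_mid := T.map_adj_iff.2 t.adj_src_mid
  adj_mid_dst := T.map_adj_iff.2 t.adj_mid_dst
  src_ne_dst := T.injective.ne t.src_ne_dst

@[simp] lemma map_one (t : G.TwoArc) : t.map 1 = t := rfl

lemma map_mul (S T : G ≃g G) (t : G.TwoArc) : t.map (S * T) = (t.map T).map S := rfl

def equivSubtype :
    G.TwoArc ≃ {t : V × V × V // G.Adj t.1 t.2.1 ∧ G.Adj t.2.1 t.2.2 ∧ t.1 ≠ t.2.2} where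
  toFun t := ⟨(t.src, t.mid, t.dst), t.adj_src_mid, t.adj_mid_dst, t.src_ne_dst⟩
  invFun t := ⟨t.1.1, t.1.2.1, t.1.2.2, t.2.1, t.2.2.1, t.2.2.2⟩
  left_inv _ := rfl
  right_inv _ := rfl

lemma map_injective_of_stabilizer_trivial (t₀ : G.TwoArc)
    (h : ∀ T : G ≃g G, t₀.map T = t₀ → T = 1) :
    Function.Injective (t₀.map · : G ≃g G → _) := by
  intro S T hST
  refine inv_mul_eq_one.1 (h _ ?_)
  rw [map_mul, ← show t₀.map S = t₀.map T from hST, ← map_mul, inv_mul_cancel, map_one]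

lemma map_surjective_of_transitive (t₀ : G.TwoArc)
    (hvert : ∀ x, ∃ T : G ≃g G, T t₀.mid = x)
    (hloc : ∀ t : G.TwoArc, t.mid = t₀.mid → ∃ T : G ≃g G, t₀.map T = t) :
    Function.Surjective (t₀.map · : G ≃g G → _) := by
  intro t
  obtain ⟨T, hT⟩ := hvert t.mid
  obtain ⟨S, hS⟩ := hloc (t.map T⁻¹) (by simp [map, ← hT])
  refine ⟨T * S, ?_⟩
  simp only [map_mul, hS]
  ext <;> simp [map]

end TwoArc

end SimpleGraph

namespace MK

open SimpleGraph

lemma isRegularOfDegree_three : MK.IsRegularOfDegree 3 := by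
  intro v
  revert v
  decide

lemma connected : MK.Connected := by
  have hrim : ∀ n : ℕ, MK.Reachable (0, 0) ((n : ZMod 8), 0) := by
    intro n
    induction n with
    | zero => rfl
    | succ n ih =>
      refine ih.trans (Adj.reachable ?_)
      have : ∀ i : ZMod 8, MK.Adj (i, 0) (i + 1, 0) := by decide
      simpa using this n
  refine (connected_iff_exists_forall_reachable MK).2 ⟨(0, 0), fun ⟨i, s⟩ => ?_⟩
  have hi : MK.Reachable (0, 0) (i, 0) := by simpa using hrim i.val
  fin_cases s
  · exact hi
  · have : ∀ i : ZMod 8, MK.Adj (i, 0) (i, 1) := by decide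
    exact hi.trans (this i).reachable

def rotate (k : ZMod 8) : MK ≃g MK where
  toEquiv := (Equiv.addRight k).prodCongr (Equiv.refl _)
  map_rel_iff' := by
    have : ∀ (k : ZMod 8) (v w : ZMod 8 × Fin 2),
        MK.Adj (v.1 + k, v.2) (w.1 + k, w.2) ↔ MK.Adj v w := by decide
    intro v w
    exact this k v w

def reflect : MK ≃g MK where
  toEquiv := (Equiv.neg _).prodCongr (Equiv.refl _)
  map_rel_iff' := by
    have : ∀ v w : ZMod 8 × Fin 2, MK.Adj (-v.1, v.2) (-w.1, w.2) ↔ MK.Adj v w := by decide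
    intro v w
    exact this v w

-- Possible because `3 * 3 = 1` in `ZMod 8`.
def swapRings : MK ≃g MK where
  toEquiv := Function.Involutive.toPerm (fun v => (3 * v.1, 1 - v.2)) <| by
    intro v
    revert v
    decide
  map_rel_iff' := by
    have : ∀ v w : ZMod 8 × Fin 2,
        MK.Adj (3 * v.1, 1 - v.2) (3 * w.1, 1 - w.2) ↔ MK.Adj v w := by decide
    intro v w
    exact this v w

-- The involution fixing `(0, 0)` and `(1, 0)` and swapping `(7, 0)` with `(0, 1)`; it sends the
-- outer 8-cycle to `(0,0) (1,0) (1,1) (4,1) (4,0) (5,0) (5,1) (0,1)`.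
def swapRimSpokeFun (v : ZMod 8 × Fin 2) : ZMod 8 × Fin 2 :=
  if v.2 = 0 then ![(0, 0), (1, 0), (1, 1), (4, 1), (4, 0), (5, 0), (5, 1), (0, 1)] v.1
  else ![(7, 0), (2, 0), (6, 1), (7, 1), (3, 0), (6, 0), (2, 1), (3, 1)] v.1

def swapRimSpoke : MK ≃g MK where
  toEquiv := Function.Involutive.toPerm swapRimSpokeFun (by intro v; revert v; decide)
  map_rel_iff' := by
    have : ∀ v w, MK.Adj (swapRimSpokeFun v) (swapRimSpokeFun w) ↔ MK.Adj v w := by decide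
    intro v w
    exact this v w

lemma not_withinThree_iff : ∀ x y : ZMod 8 × Fin 2,
    ¬ MK.WithinThree x y ↔ y = (x.1 + 4, x.2) := by
  decide +kernel

lemma iso_apply_antipode (T : MK ≃g MK) (x : ZMod 8 × Fin 2) :
    T (x.1 + 4, x.2) = ((T x).1 + 4, (T x).2) := by
  refine (not_withinThree_iff _ _).1 fun h => (not_withinThree_iff x _).2 rfl ?_
  simpa using h.map T.symm

lemma existsUnique_continuation :
    ∀ a u b : ZMod 8 × Fin 2, MK.Adj a u → MK.Adj u b → a ≠ b →
    ∃! c, MK.Adj b c ∧ c ≠ u ∧ MK.Adj c (a.1 + 4, a.2) := by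
  unfold ExistsUnique
  decide +kernel

lemma iso_fixes_neighbors_of_adj (T : MK ≃g MK) {u b : ZMod 8 × Fin 2} (hu : T u = u)
    (hN : ∀ x, MK.Adj u x → T x = x) (hub : MK.Adj u b) : ∀ x, MK.Adj b x → T x = x := by
  obtain ⟨a, hua, hab⟩ : ∃ a, MK.Adj u a ∧ a ≠ b := by
    obtain ⟨a, ha, hab⟩ := Finset.exists_mem_ne (s := MK.neighborFinset u)
      (by rw [card_neighborFinset_eq_degree, isRegularOfDegree_three.degree_eq]; norm_num) b
    exact ⟨a, (mem_neighborFinset _ _ _).1 ha, hab⟩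
  obtain ⟨c, ⟨hbc, hcu, hca⟩, huniq⟩ := existsUnique_continuation a u b hua.symm hub hab
  have hTc : T c = c := by
    refine huniq (T c) ⟨?_, fun h => hcu (T.injective (h.trans hu.symm)), ?_⟩
    · simpa [hN b hub] using T.map_adj_iff.2 hbc
    · simpa [iso_apply_antipode, hN a hua] using T.map_adj_iff.2 hca
  exact isRegularOfDegree_three.iso_fixes_neighbors T hub.symm hbc (fun h => hcu h.symm)
    (hN b hub) hu hTc

theorem eq_one_of_map_twoArc_eq (T : MK ≃g MK) (t : MK.TwoArc) (ht : t.map T = t) : T = 1 := by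
  have hsrc : T t.src = t.src := congrArg TwoArc.src ht
  have hmid : T t.mid = t.mid := congrArg TwoArc.mid ht
  have hdst : T t.dst = t.dst := congrArg TwoArc.dst ht
  have hstar : ∀ v, T v = v ∧ ∀ x, MK.Adj v x → T x = x := fun v =>
    (connected.preconnected t.mid v).of_adj_imp
      (P := fun v => T v = v ∧ ∀ x, MK.Adj v x → T x = x)
      (fun _ b hub ⟨hu, hN⟩ => ⟨hN b hub, iso_fixes_neighbors_of_adj T hu hN hub⟩)
      ⟨hmid, isRegularOfDegree_three.iso_fixes_neighbors T t.adj_src_mid.symm t.adj_mid_dst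
        t.src_ne_dst hmid hsrc hdst⟩
  exact RelIso.ext fun v => (hstar v).1

def baseArc : MK.TwoArc := ⟨(1, 0), (0, 0), (7, 0), by decide, by decide, by decide⟩

lemma exists_iso_apply_origin_eq (x : ZMod 8 × Fin 2) : ∃ T : MK ≃g MK, T (0, 0) = x := by
  have key : ∀ i : ZMod 8,
      rotate i (0, 0) = (i, 0) ∧ (rotate i * swapRings) (0, 0) = (i, 1) := by
    decide
  obtain ⟨i, s⟩ := x
  fin_cases s
  exacts [⟨_, (key i).1⟩, ⟨_, (key i).2⟩]

lemma exists_map_baseArc_eq (t : MK.TwoArc) (ht : t.mid = (0, 0)) :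
    ∃ T : MK ≃g MK, baseArc.map T = t := by
  have key : ∀ a b : ZMod 8 × Fin 2, MK.Adj a (0, 0) → MK.Adj (0, 0) b → a ≠ b →
      ∃ T ∈ [1, reflect, swapRimSpoke, reflect * swapRimSpoke, swapRimSpoke * reflect,
        reflect * swapRimSpoke * reflect], T (1, 0) = a ∧ T (0, 0) = (0, 0) ∧ T (7, 0) = b := by
    decide
  obtain ⟨T, -, hsrc, hmid, hdst⟩ :=
    key t.src t.dst (ht ▸ t.adj_src_mid) (ht ▸ t.adj_mid_dst) t.src_ne_dst
  exact ⟨T, TwoArc.ext hsrc (hmid.trans ht.symm) hdst⟩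

set_option maxRecDepth 10000 in
lemma card_twoArc : Nat.card MK.TwoArc = 96 := by
  rw [Nat.card_congr TwoArc.equivSubtype, Nat.card_eq_fintype_card]
  decide

end MK

/-- The automorphism group of the Möbius–Kantor graph has exactly 96 elements. -/
theorem card_aut_moebiusKantor : Nat.card (MK ≃g MK) = 96 := by
  have hbij : Function.Bijective (MK.baseArc.map · : MK ≃g MK → MK.TwoArc) :=
    ⟨SimpleGraph.TwoArc.map_injective_of_stabilizer_trivial _
        fun T => MK.eq_one_of_map_twoArc_eq T _,
      SimpleGraph.TwoArc.map_surjective_of_transitive _ MK.exists_iso_apply_origin_eq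
        MK.exists_map_baseArc_eq⟩
  rw [Nat.card_congr (Equiv.ofBijective _ hbij), MK.card_twoArc]
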